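/- Let k be a field and R a commutative k-algebra with an ideal J such that: (i) R is J-adically complete and separated, i.e. the canonical ring homomorphism R \to \varprojlim_n R/J^n is bijective; (ii) the composite k \to R \to R/J is an isomorphism. Let \varphi : R \to R be a k-algebra homomorphism with \varphi(J) \subseteq J such that the induced k-linear map J/J^2 \to J/J^2 is the identity. Then \varphi is bijective. -/

import Mathlib

/-!
The endomorphism `φ - id` raises the `J`-adic filtration degree by one: on `R/J` because
`k → R/J` is onto and `φ` fixes `k`, on `J/J²` by hypothesis, and on every `J^n` by the identity
`φ(ab) - ab = (φ a - a) φ b + a (φ b - b)`. Any additive map `f` with this property on a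
complete separated module is injective, since a zero of `f` lies in every `J^n`, and surjective,
since the iteration `a ↦ a + (s - f a)` from `0` converges to a preimage of `s`, the residual
`s - f a` gaining one power of `J` at each step.
-/

/-- The inverse limit `lim_n R/J^n` of the quotients of a commutative ring `R` by the
powers of an ideal `J`, realized as the set of sequences compatible with the canonical
factor maps `R/J^(n+1) → R/J^n`. -/
def AdicLim {R : Type*} [CommRing R] (J : Ideal R) : Type _ :=
  { f : ∀ n : ℕ, R ⧸ J ^ n //
    ∀ n : ℕ, Ideal.Quotient.factor (S := J ^ (n + 1)) (T := J ^ n)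
      (Ideal.pow_le_pow_right (Nat.le_succ n)) (f (n + 1)) = f n }

/-- The canonical map `R → lim_n R/J^n` (the underlying function of the canonical ring
homomorphism). -/
def toAdicLim {R : Type*} [CommRing R] (J : Ideal R) (r : R) : AdicLim J :=
  ⟨fun n => Ideal.Quotient.mk (J ^ n) r, fun n => by
    simp [Ideal.Quotient.factor]⟩

section AdicUnipotent

variable {R M : Type*} [CommRing R] [AddCommGroup M] [Module R M] (I : Ideal R)

def IsAdicUnipotent (f : M →+ M) : Prop :=
  ∀ n : ℕ, ∀ x ∈ (I ^ n • ⊤ : Submodule R M), f x - x ∈ (I ^ (n + 1) • ⊤ : Submodule R M)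

namespace IsAdicUnipotent

variable {I} {f : M →+ M}

theorem map_mem (hf : IsAdicUnipotent I f) {n : ℕ} {x : M}
    (hx : x ∈ (I ^ n • ⊤ : Submodule R M)) : f x ∈ (I ^ n • ⊤ : Submodule R M) := by
  have hle : (I ^ (n + 1) • ⊤ : Submodule R M) ≤ I ^ n • ⊤ :=
    Submodule.smul_mono_left (Ideal.pow_le_pow_right n.le_succ)
  simpa using add_mem (hle (hf n x hx)) hx

theorem injective [IsHausdorff I M] (hf : IsAdicUnipotent I f) : Function.Injective f := by
  refine (injective_iff_map_eq_zero f).2 fun x hx => IsHausdorff.haus ‹_› x fun n => ?_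
  rw [SModEq.zero]
  induction n with
  | zero => simp
  | succ n ih => simpa [hx] using hf n x ih

theorem surjective [IsAdicComplete I M] (hf : IsAdicUnipotent I f) :
    Function.Surjective f := by
  intro s
  set a : ℕ → M := fun n => (fun y => y + (s - f y))^[n] 0
  have a_succ (n : ℕ) : a (n + 1) = a n + (s - f (a n)) :=
    Function.iterate_succ_apply' _ n 0
  have residual (n : ℕ) : s - f (a n) ∈ (I ^ n • ⊤ : Submodule R M) := by
    induction n with
    | zero => simp
    | succ n ih =>
      rw [a_succ, map_add, sub_add_eq_sub_sub, ← neg_sub]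
      exact neg_mem (hf n _ ih)
  have cauchy : AdicCompletion.IsAdicCauchy I M a :=
    (AdicCompletion.isAdicCauchy_iff I M a).2 fun n => by
      rw [SModEq.sub_mem, a_succ, sub_add_cancel_left]
      exact neg_mem (residual n)
  obtain ⟨L, hL⟩ := IsPrecomplete.prec inferInstance cauchy
  refine ⟨L, (IsHausdorff.eq_iff_smodEq (I := I)).2 fun n => ?_⟩
  rw [SModEq.sub_mem]
  have hLn : f (L - a n) ∈ (I ^ n • ⊤ : Submodule R M) :=
    hf.map_mem (SModEq.sub_mem.1 (hL n).symm)
  rw [map_sub] at hLn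
  simpa using sub_mem hLn (residual n)

theorem bijective [IsAdicComplete I M] (hf : IsAdicUnipotent I f) : Function.Bijective f :=
  ⟨hf.injective, hf.surjective⟩

end IsAdicUnipotent

end AdicUnipotent

theorem isAdicComplete_of_bijective_toAdicLim {R : Type*} [CommRing R] {J : Ideal R}
    (h : Function.Bijective (toAdicLim J)) : IsAdicComplete J R where
  haus' x hx := h.1 <| Subtype.ext <| funext fun n => by
    simpa [toAdicLim, SModEq.zero, smul_eq_mul, Ideal.mul_top, Ideal.Quotient.eq_zero_iff_mem]
      using hx n
  prec' a ha := by
    obtain ⟨L, hL⟩ := h.2 ⟨fun n => Ideal.Quotient.mk (J ^ n) (a n), fun n => by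
      simpa [Ideal.Quotient.factor, Ideal.Quotient.eq, SModEq.sub_mem, smul_eq_mul,
        Ideal.mul_top] using (ha n.le_succ).symm⟩
    refine ⟨L, fun n => ?_⟩
    have := congrFun (congrArg Subtype.val hL) n
    simpa [toAdicLim, Ideal.Quotient.eq, SModEq.sub_mem, smul_eq_mul, Ideal.mul_top]
      using this.symm

theorem AlgHom.sub_self_mem_of_surjective_residue {k R : Type*} [CommRing k] [CommRing R]
    [Algebra k R] {J : Ideal R}
    (hres : Function.Surjective fun c : k => Ideal.Quotient.mk J (algebraMap k R c))
    (φ : R →ₐ[k] R) (hφJ : ∀ x ∈ J, φ x ∈ J) (x : R) : φ x - x ∈ J := by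
  obtain ⟨c, hc⟩ := hres (Ideal.Quotient.mk J x)
  have hxc : x - algebraMap k R c ∈ J := Ideal.Quotient.eq.1 hc.symm
  have : φ x - x = φ (x - algebraMap k R c) - (x - algebraMap k R c) := by
    rw [map_sub, φ.commutes]; ring
  exact this ▸ sub_mem (hφJ _ hxc) hxc

theorem RingHom.isAdicUnipotent_of_sub_self_mem {R : Type*} [CommRing R] {J : Ideal R}
    (φ : R →+* R) (hφJ : ∀ x ∈ J, φ x ∈ J) (hφ₀ : ∀ x, φ x - x ∈ J)
    (hφ₁ : ∀ x ∈ J, φ x - x ∈ J ^ 2) :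
    IsAdicUnipotent J (φ : R →+ R) := by
  intro n
  simp only [smul_eq_mul, Ideal.mul_top, AddMonoidHom.coe_coe]
  induction n with
  | zero => simpa using fun x => hφ₀ x
  | succ n ih =>
    intro x hx
    rw [pow_succ] at hx
    refine Submodule.mul_induction_on hx (fun a ha b hb => ?_) fun u v hu hv => ?_
    · have hab : φ (a * b) - a * b = (φ a - a) * φ b + a * (φ b - b) := by
        rw [map_mul]; ring
      rw [hab]
      exact add_mem (pow_succ J (n + 1) ▸ Ideal.mul_mem_mul (ih a ha) (hφJ b hb))
        (pow_add J n 2 ▸ Ideal.mul_mem_mul ha (hφ₁ b hb))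
    · simpa [map_add, add_sub_add_comm] using add_mem hu hv

/-- let `k` be a field and `R` a commutative `k`-algebra with an ideal `J`
such that (i) `R` is `J`-adically complete and separated (the canonical ring homomorphism
`R → lim_n R/J^n` is bijective), and (ii) the composite `k → R → R/J` is an isomorphism.
If `φ : R → R` is a `k`-algebra homomorphism with `φ(J) ⊆ J` inducing the identity on
`J/J²`, then `φ` is bijective. -/
theorem formal_scheme_endomorphism_bijective
    {k R : Type*} [Field k] [CommRing R] [Algebra k R] (J : Ideal R)
    (hcomplete : Function.Bijective (toAdicLim J))
    (hresidue : Function.Bijective fun x : k => Ideal.Quotient.mk J (algebraMap k R x))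
    (φ : R →ₐ[k] R)
    (hφJ : ∀ x ∈ J, φ x ∈ J)
    (hφid : ∀ x ∈ J, φ x - x ∈ J ^ 2) :
    Function.Bijective φ := by
  have : IsAdicComplete J R := isAdicComplete_of_bijective_toAdicLim hcomplete
  exact ((φ : R →+* R).isAdicUnipotent_of_sub_self_mem hφJ
    (φ.sub_self_mem_of_surjective_residue hresidue.2 hφJ) hφid).bijective
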